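/- Let X, Y be separable Banach spaces and G ∈ W^{1,∞}(I; L(X;Y*)). For any u ∈ H¹(I;X) and v ∈ H¹(I;Y), the map t ↦ ⟨G(t)u(t), v(t)⟩_{Y*×Y} belongs to W^{1,1}(I) and for almost all t ∈ I its derivative satisfies (d/dt)⟨G(t)u(t),v(t)⟩ = ⟨G'(t)u(t),v(t)⟩ + ⟨G(t)u'(t),v(t)⟩ + ⟨G(t)u(t),v'(t)⟩. -/

import Mathlib

open MeasureTheory Filter Topology
open scoped RealInnerProductSpace ENNReal

noncomputable section

/-- Lebesgue measure on the time interval `I = (0,T)`. -/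
def μI (T : ℝ) : Measure ℝ := volume.restrict (Set.Ioo 0 T)

variable {X : Type*} [NormedAddCommGroup X] [NormedSpace ℝ X]

/-- `u'` is the weak derivative of `u` on `(0,T)`: the (absolutely continuous
representative of the) function `u` is the integral of `u'`. -/
def IsWeakDeriv (T : ℝ) (u u' : ℝ → X) : Prop :=
  IntervalIntegrable u' volume 0 T ∧
  ∀ t ∈ Set.Icc (0:ℝ) T, u t = u 0 + ∫ s in (0:ℝ)..t, u' s

/-- Membership in `L¹((0,T); X)`. -/
def MemL1 (T : ℝ) (u : ℝ → X) : Prop := MemLp u 1 (μI T)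

/-- Membership in `L²((0,T); X)`. -/
def MemL2 (T : ℝ) (u : ℝ → X) : Prop := MemLp u 2 (μI T)

/-- Membership in `L^∞((0,T); X)`. -/
def MemLinf (T : ℝ) (u : ℝ → X) : Prop := MemLp u ⊤ (μI T)

/-- `u ∈ H¹((0,T); X)` with weak derivative `u'`. -/
def MemH1 (T : ℝ) (u u' : ℝ → X) : Prop := MemL2 T u ∧ MemL2 T u' ∧ IsWeakDeriv T u u'

/-- `u ∈ W^{1,∞}((0,T); X)` with weak derivative `u'`. -/
def MemW1inf (T : ℝ) (u u' : ℝ → X) : Prop := MemLinf T u ∧ MemLinf T u' ∧ IsWeakDeriv T u u'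

/-- `D 0 ∈ H^k((0,T); X)`, the family `D` listing its weak derivatives `D j = (D 0)⁽ʲ⁾`. -/
def MemHk (T : ℝ) (k : ℕ) (D : ℕ → ℝ → X) : Prop :=
  (∀ j ≤ k, MemL2 T (D j)) ∧ ∀ j < k, IsWeakDeriv T (D j) (D (j+1))

/-- `D 0 ∈ W^{k,∞}((0,T); X)`, the family `D` listing its weak derivatives. -/
def MemWkinf (T : ℝ) (k : ℕ) (D : ℕ → ℝ → X) : Prop :=
  (∀ j ≤ k, MemLinf T (D j)) ∧ ∀ j < k, IsWeakDeriv T (D j) (D (j+1))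

/-!
On `[0, T]` the weak-derivative hypotheses make `G`, `u` and `v` primitives of integrable
functions. Such primitives are absolutely continuous and, by Lebesgue's differentiation theorem,
differentiable almost everywhere with the prescribed derivatives. Applying a continuous bilinear
map preserves absolute continuity, and the classical product rule gives the derivative of
`t ↦ G t (u t) (v t)` almost everywhere. Banach-valued absolutely continuous functions need not be
differentiable a.e., but when an integrable a.e. derivative is known the function is still its
primitive: subtracting that primitive leaves an absolutely continuous function with vanishing
a.e. derivative, which is constant.
-/

namespace AbsolutelyContinuousOnInterval

open Set

variable {a b : ℝ}

theorem of_dist_le {M N : Type*} [PseudoMetricSpace M] [PseudoMetricSpace N]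
    {φ : ℝ → M} {h : ℝ → N} (K : ℝ) (hh : AbsolutelyContinuousOnInterval h a b)
    (hφ : ∀ x ∈ uIcc a b, ∀ y ∈ uIcc a b, dist (φ x) (φ y) ≤ K * dist (h x) (h y)) :
    AbsolutelyContinuousOnInterval φ a b := by
  refine squeeze_zero' (.of_forall fun _ ↦ Finset.sum_nonneg fun _ _ ↦ dist_nonneg) ?_
    (by simpa using Tendsto.const_mul K hh)
  rw [eventually_inf_principal]
  filter_upwards with ⟨n, I⟩ hnI
  rw [Finset.mul_sum]
  gcongr with i hi
  exact hφ _ (hnI.1 i hi).1 _ (hnI.1 i hi).2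

variable {E F : Type*} [NormedAddCommGroup E] [NormedSpace ℝ E]
  [NormedAddCommGroup F] [NormedSpace ℝ F]

theorem clm_apply {B : ℝ → E →L[ℝ] F} {P : ℝ → E}
    (hB : AbsolutelyContinuousOnInterval B a b) (hP : AbsolutelyContinuousOnInterval P a b) :
    AbsolutelyContinuousOnInterval (fun t ↦ B t (P t)) a b := by
  obtain ⟨C, hC⟩ := hB.exists_bound
  obtain ⟨D, hD⟩ := hP.exists_bound
  refine squeeze_zero' (.of_forall fun _ ↦ Finset.sum_nonneg fun _ _ ↦ dist_nonneg) ?_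
    (by simpa using (Tendsto.const_mul C hP).add (Tendsto.const_mul D hB))
  rw [eventually_inf_principal]
  filter_upwards with ⟨n, I⟩ hnI
  rw [Finset.mul_sum, Finset.mul_sum, ← Finset.sum_add_distrib]
  gcongr with i hi
  obtain ⟨hx, hy⟩ := hnI.1 i hi
  set x := (I i).1
  set y := (I i).2
  calc dist (B x (P x)) (B y (P y))
      ≤ dist (B x (P x)) (B x (P y)) + dist (B x (P y)) (B y (P y)) := dist_triangle _ _ _
    _ ≤ C * dist (P x) (P y) + D * dist (B x) (B y) := by
      gcongr
      · exact ((B x).dist_le_opNorm _ _).trans (by gcongr; exact hC x hx)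
      · rw [dist_eq_norm, dist_eq_norm, ← sub_apply, mul_comm]
        exact ((B x - B y).le_opNorm _).trans (by gcongr; exact hD y hy)

end AbsolutelyContinuousOnInterval

section Primitive

open Set

variable {E F : Type*} [NormedAddCommGroup E] [NormedSpace ℝ E]
  [NormedAddCommGroup F] [NormedSpace ℝ F] {a b : ℝ}

theorem IntervalIntegrable.absolutelyContinuousOnInterval_intervalIntegral'
    {f : ℝ → E} {c : ℝ} (hf : IntervalIntegrable f volume a b) (hc : c ∈ uIcc a b) :
    AbsolutelyContinuousOnInterval (fun x ↦ ∫ t in c..x, f t) a b := by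
  refine .of_dist_le 1 (hf.norm.absolutelyContinuousOnInterval_intervalIntegral hc)
    fun x hx y hy ↦ ?_
  have hsub : ∀ z ∈ uIcc a b, IntervalIntegrable f volume c z :=
    fun z hz ↦ hf.mono_set (uIcc_subset_uIcc hc hz)
  rw [one_mul, dist_eq_norm, dist_eq_norm,
    intervalIntegral.integral_interval_sub_left (hsub x hx) (hsub y hy),
    intervalIntegral.integral_interval_sub_left (hsub x hx).norm (hsub y hy).norm, Real.norm_eq_abs]
  exact intervalIntegral.norm_integral_le_abs_integral_norm

theorem AbsolutelyContinuousOnInterval.eq_add_integral_of_ae_hasDerivAt [CompleteSpace E]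
    {f f' : ℝ → E} (hf : AbsolutelyContinuousOnInterval f a b)
    (hf' : IntervalIntegrable f' volume a b)
    (hderiv : ∀ᵐ x, x ∈ uIcc a b → HasDerivAt f (f' x) x) :
    ∀ x ∈ uIcc a b, f x = f a + ∫ t in a..x, f' t := by
  have hprim := hf'.absolutelyContinuousOnInterval_intervalIntegral' left_mem_uIcc
  obtain ⟨C, hC⟩ := (hf.fun_sub hprim).const_of_ae_hasDerivAt_zero <| by
    filter_upwards [hderiv, hf'.ae_hasDerivAt_integral] with x hfx hIx hx
    simpa only [sub_self] using (hfx hx).fun_sub (hIx hx a left_mem_uIcc)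
  intro x hx
  have hCa := hC a left_mem_uIcc
  have hCx := hC x hx
  simp only [intervalIntegral.integral_same, sub_zero] at hCa
  rw [hCa, ← hCx, sub_add_cancel]

theorem IntervalIntegrable.clm_apply_continuousOn {B : ℝ → E →L[ℝ] F} {P : ℝ → E}
    (hB : IntervalIntegrable B volume a b) (hP : ContinuousOn P (uIcc a b)) :
    IntervalIntegrable (fun t ↦ B t (P t)) volume a b := by
  obtain ⟨C, hC⟩ := isCompact_uIcc.exists_bound_of_continuousOn hP
  rw [intervalIntegrable_iff] at hB ⊢
  exact (ContinuousLinearMap.apply ℝ F).flip.integrable_of_bilin_of_bdd_right C hB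
    ((hP.aestronglyMeasurable measurableSet_uIcc).mono_set uIoc_subset_uIcc)
    (ae_restrict_of_forall_mem measurableSet_uIoc fun t ht ↦ hC t (uIoc_subset_uIcc ht))

theorem ContinuousOn.clm_apply_intervalIntegrable {B : ℝ → E →L[ℝ] F} {P : ℝ → E}
    (hB : ContinuousOn B (uIcc a b)) (hP : IntervalIntegrable P volume a b) :
    IntervalIntegrable (fun t ↦ B t (P t)) volume a b := by
  obtain ⟨C, hC⟩ := isCompact_uIcc.exists_bound_of_continuousOn hB
  rw [intervalIntegrable_iff] at hP ⊢
  exact (ContinuousLinearMap.id ℝ (E →L[ℝ] F)).integrable_of_bilin_of_bdd_left C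
    ((hB.aestronglyMeasurable measurableSet_uIcc).mono_set uIoc_subset_uIcc)
    (ae_restrict_of_forall_mem measurableSet_uIoc fun t ht ↦ hC t (uIoc_subset_uIcc ht)) hP

end Primitive

section WeakDerivative

open Set

variable {E F : Type*} [NormedAddCommGroup E] [NormedAddCommGroup F] {T : ℝ}

theorem IntervalIntegrable.memL1 (hT : 0 ≤ T) {f : ℝ → E}
    (hf : IntervalIntegrable f volume 0 T) : MemL1 T f := by
  rw [MemL1, memLp_one_iff_integrable, μI]
  exact ((intervalIntegrable_iff_integrableOn_Ioc_of_le hT).1 hf).mono_set Ioo_subset_Ioc_self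

variable [NormedSpace ℝ E] [NormedSpace ℝ F]

namespace IsWeakDeriv

variable {u u' : ℝ → E}

theorem absolutelyContinuousOnInterval (hT : 0 ≤ T) (h : IsWeakDeriv T u u') :
    AbsolutelyContinuousOnInterval u 0 T := by
  refine .of_dist_le 1 (h.1.absolutelyContinuousOnInterval_intervalIntegral' left_mem_uIcc)
    fun x hx y hy ↦ ?_
  rw [uIcc_of_le hT] at hx hy
  rw [h.2 x hx, h.2 y hy, dist_add_left, one_mul]

theorem memL1 (hT : 0 ≤ T) (h : IsWeakDeriv T u u') : MemL1 T u :=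
  (h.absolutelyContinuousOnInterval hT).continuousOn.intervalIntegrable.memL1 hT

theorem ae_hasDerivAt [CompleteSpace E] (hT : 0 ≤ T) (h : IsWeakDeriv T u u') :
    ∀ᵐ x, x ∈ uIcc 0 T → HasDerivAt u (u' x) x := by
  filter_upwards [h.1.ae_hasDerivAt_integral, Measure.ae_ne volume 0, Measure.ae_ne volume T]
    with x hIx hx0 hxT hx
  have hx' : x ∈ Ioo 0 T := by
    rw [uIcc_of_le hT] at hx
    exact ⟨hx.1.lt_of_ne' hx0, hx.2.lt_of_ne hxT⟩
  refine ((hIx hx 0 left_mem_uIcc).const_add (u 0)).congr_of_eventuallyEq ?_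
  filter_upwards [Icc_mem_nhds hx'.1 hx'.2] with s hs using h.2 s hs

theorem clm_apply [CompleteSpace E] [CompleteSpace F] (hT : 0 ≤ T)
    {B B' : ℝ → E →L[ℝ] F} (hB : IsWeakDeriv T B B') (hu : IsWeakDeriv T u u') :
    IsWeakDeriv T (fun t ↦ B t (u t)) (fun t ↦ B' t (u t) + B t (u' t)) := by
  have hBac := hB.absolutelyContinuousOnInterval hT
  have huac := hu.absolutelyContinuousOnInterval hT
  have hint : IntervalIntegrable (fun t ↦ B' t (u t) + B t (u' t)) volume 0 T :=
    (hB.1.clm_apply_continuousOn huac.continuousOn).add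
      (hBac.continuousOn.clm_apply_intervalIntegrable hu.1)
  refine ⟨hint, fun t ht ↦ ?_⟩
  refine (hBac.clm_apply huac).eq_add_integral_of_ae_hasDerivAt hint ?_ t
    (by rwa [uIcc_of_le hT])
  filter_upwards [hB.ae_hasDerivAt hT, hu.ae_hasDerivAt hT] with x hBx hux hx
  exact (hBx hx).clm_apply (hux hx)

end IsWeakDeriv

end WeakDerivative

theorem statement1_general
    {X Y : Type*} [NormedAddCommGroup X] [NormedSpace ℝ X] [CompleteSpace X]
    [NormedAddCommGroup Y] [NormedSpace ℝ Y] [CompleteSpace Y]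
    (T : ℝ) (hT : 0 < T)
    (G G' : ℝ → X →L[ℝ] Y →L[ℝ] ℝ) (hG : MemW1inf T G G')
    (u u' : ℝ → X) (hu : MemH1 T u u')
    (v v' : ℝ → Y) (hv : MemH1 T v v') :
    MemL1 T (fun t => G t (u t) (v t)) ∧
    MemL1 T (fun t => G' t (u t) (v t) + G t (u' t) (v t) + G t (u t) (v' t)) ∧
    IsWeakDeriv T (fun t => G t (u t) (v t))
      (fun t => G' t (u t) (v t) + G t (u' t) (v t) + G t (u t) (v' t)) := by
  obtain ⟨-, -, hGw⟩ := hG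
  obtain ⟨-, -, huw⟩ := hu
  obtain ⟨-, -, hvw⟩ := hv
  have hGuv := (hGw.clm_apply hT.le huw).clm_apply hT.le hvw
  simp only [add_apply] at hGuv
  exact ⟨hGuv.memL1 hT.le, hGuv.1.memL1 hT.le, hGuv⟩

/-- generalized product rule, Lemma 2.2.
If `G ∈ W^{1,∞}(I; L(X;Y*))` and `u ∈ H¹(I;X)`, `v ∈ H¹(I;Y)`, then
`t ↦ ⟨G(t)u(t), v(t)⟩` belongs to `W^{1,1}(I)` and its weak derivative is
`⟨G'u,v⟩ + ⟨Gu',v⟩ + ⟨Gu,v'⟩`. -/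
theorem statement1
    {X Y : Type*} [NormedAddCommGroup X] [NormedSpace ℝ X] [CompleteSpace X]
    [TopologicalSpace.SeparableSpace X]
    [NormedAddCommGroup Y] [NormedSpace ℝ Y] [CompleteSpace Y]
    [TopologicalSpace.SeparableSpace Y]
    (T : ℝ) (hT : 0 < T)
    (G G' : ℝ → X →L[ℝ] Y →L[ℝ] ℝ) (hG : MemW1inf T G G')
    (u u' : ℝ → X) (hu : MemH1 T u u')
    (v v' : ℝ → Y) (hv : MemH1 T v v') :
    MemL1 T (fun t => G t (u t) (v t)) ∧
    MemL1 T (fun t => G' t (u t) (v t) + G t (u' t) (v t) + G t (u t) (v' t)) ∧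
    IsWeakDeriv T (fun t => G t (u t) (v t))
      (fun t => G' t (u t) (v t) + G t (u' t) (v t) + G t (u t) (v' t)) :=
  statement1_general T hT G G' hG u u' hu v v' hv
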